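/- Let $b:\mathbb{R}^{2d}\to\mathbb{C}$ be smooth and suppose there are constants $\rho\in(0,1]$, $h>0$, $C\ge 1$ and a log-convex sequence $A_p$ with $A_0=A_1=1$ such that $|D^\alpha b(w)|\le C h^{|\alpha|}A_{|\alpha|}|b(w)|\langle w\rangle^{-\rho|\alpha|}$ for all $\alpha\in\mathbb{N}^{2d}$ and all $w\in\mathbb{R}^{2d}$, with $b$ nowhere vanishing. Then there exist $h_1, C_1>0$ (with $h_1$ depending polynomially on $h$ and the dimension, and assuming additionally that $A_p/p!$ is log-convex and $\sum_p A_{p-1}/A_p<\infty$) such that for all $n\in\mathbb{N}$ and $\alpha\in\mathbb{N}^{2d}$, $|D^\alpha (b(w)^n)| \le C_1 2^n h_1^{|\alpha|} A_{|\alpha|} \langle w\rangle^{-\rho|\alpha|} |b(w)|^n$ for all $w\in\mathbb{R}^{2d}$. -/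

import Mathlib

open Finset Function
open scoped ContDiff

/-- Directional derivative operator on functions. -/
noncomputable def dirDeriv {E F : Type*} [NormedAddCommGroup E] [NormedSpace ℝ E]
    [NormedAddCommGroup F] [NormedSpace ℝ F] (v : E) (f : E → F) : E → F :=
  fun x => fderiv ℝ f x v

/-- Multi-index partial derivative `∂^α f` on Euclidean `ℝ^m`. -/
noncomputable def multiDeriv {m : ℕ} {F : Type*} [NormedAddCommGroup F] [NormedSpace ℝ F]
    (α : Fin m → ℕ) (f : EuclideanSpace ℝ (Fin m) → F) : EuclideanSpace ℝ (Fin m) → F :=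
  ((List.finRange m).foldr (fun i g => (dirDeriv (EuclideanSpace.single i 1))^[α i] ∘ g) id) f

/-- Japanese bracket `⟨w⟩ = (1+|w|²)^{1/2}`. -/
noncomputable def jbr {m : ℕ} (w : EuclideanSpace ℝ (Fin m)) : ℝ :=
  Real.sqrt (1 + ‖w‖ ^ 2)

section DirDeriv

variable {E : Type*} [NormedAddCommGroup E] [NormedSpace ℝ E]

lemma sm_diff {f : E → ℂ} (hf : ContDiff ℝ ∞ f) : Differentiable ℝ f :=
  hf.differentiable (by simp)

lemma dirDeriv_smooth {v : E} {f : E → ℂ} (hf : ContDiff ℝ ∞ f) :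
    ContDiff ℝ ∞ (dirDeriv v f) :=
  (hf.fderiv_right (by simp)).clm_apply contDiff_const

lemma dirDeriv_iter_smooth {v : E} {f : E → ℂ} (hf : ContDiff ℝ ∞ f) (k : ℕ) :
    ContDiff ℝ ∞ ((dirDeriv v)^[k] f) := by
  induction k generalizing f with
  | zero => exact hf
  | succ k ih => rw [Function.iterate_succ_apply]; exact ih (dirDeriv_smooth hf)

lemma dirDeriv_const (v : E) (c : ℂ) : dirDeriv v (fun _ => c) = fun _ => 0 := by
  funext x; simp [dirDeriv]

lemma dirDeriv_iter_zero (v : E) (k : ℕ) :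
    (dirDeriv v)^[k] (fun _ => (0 : ℂ)) = fun _ => 0 := by
  induction k with
  | zero => rfl
  | succ k ih => rw [Function.iterate_succ_apply, dirDeriv_const, ih]

lemma dirDeriv_iter_const (v : E) (c : ℂ) {k : ℕ} (hk : k ≠ 0) :
    (dirDeriv v)^[k] (fun _ => c) = fun _ => 0 := by
  obtain ⟨k, rfl⟩ := Nat.exists_eq_succ_of_ne_zero hk
  rw [Function.iterate_succ_apply, dirDeriv_const, dirDeriv_iter_zero]

lemma dirDeriv_mul {v : E} {f g : E → ℂ} (hf : Differentiable ℝ f) (hg : Differentiable ℝ g) :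
    dirDeriv v (fun x => f x * g x) = fun x => dirDeriv v f x * g x + f x * dirDeriv v g x := by
  funext x
  simp only [dirDeriv, fderiv_fun_mul (hf x) (hg x)]
  simp [dirDeriv]
  ring

lemma dirDeriv_const_mul {v : E} {f : E → ℂ} (hf : Differentiable ℝ f) (c : ℂ) :
    dirDeriv v (fun x => c * f x) = fun x => c * dirDeriv v f x := by
  funext x
  simp only [dirDeriv, fderiv_const_mul (hf x) c]
  simp

lemma dirDeriv_sum {v : E} {ι : Type*} {s : Finset ι} {F : ι → E → ℂ}
    (hF : ∀ i ∈ s, Differentiable ℝ (F i)) :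
    dirDeriv v (fun x => ∑ i ∈ s, F i x) = fun x => ∑ i ∈ s, dirDeriv v (F i) x := by
  funext x
  simp only [dirDeriv, fderiv_fun_sum (fun i hi => (hF i hi) x)]
  simp

lemma dirDeriv_iter_const_mul {v : E} {f : E → ℂ} (hf : ContDiff ℝ ∞ f) (c : ℂ) (k : ℕ) :
    (dirDeriv v)^[k] (fun x => c * f x) = fun x => c * (dirDeriv v)^[k] f x := by
  induction k generalizing f with
  | zero => rfl
  | succ k ih =>
    rw [Function.iterate_succ_apply, dirDeriv_const_mul (sm_diff hf),
      Function.iterate_succ_apply]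
    exact ih (dirDeriv_smooth hf)

lemma dirDeriv_iter_sum {v : E} {ι : Type*} (k : ℕ) {s : Finset ι} {F : ι → E → ℂ}
    (hF : ∀ i ∈ s, ContDiff ℝ ∞ (F i)) :
    (dirDeriv v)^[k] (fun x => ∑ i ∈ s, F i x) = fun x => ∑ i ∈ s, (dirDeriv v)^[k] (F i) x := by
  induction k generalizing F with
  | zero => rfl
  | succ k ih =>
    rw [Function.iterate_succ_apply, dirDeriv_sum (fun i hi => sm_diff (hF i hi))]
    rw [ih (fun i hi => dirDeriv_smooth (hF i hi))]
    funext x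
    exact Finset.sum_congr rfl (fun i hi => by rw [Function.iterate_succ_apply])

end DirDeriv
section Leibniz1D

variable {E : Type*} [NormedAddCommGroup E] [NormedSpace ℝ E]

lemma dirDeriv_iter_mul {v : E} (k : ℕ) {f g : E → ℂ}
    (hf : ContDiff ℝ ∞ f) (hg : ContDiff ℝ ∞ g) :
    (dirDeriv v)^[k] (fun x => f x * g x) =
      fun x => ∑ j ∈ Finset.range (k + 1),
        (k.choose j : ℂ) * ((dirDeriv v)^[j] f x * (dirDeriv v)^[k - j] g x) := by
  induction k with
  | zero => funext x; simp
  | succ k ih =>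
    have hF : ∀ j : ℕ, ContDiff ℝ ∞ ((dirDeriv v)^[j] f) := dirDeriv_iter_smooth hf
    have hG : ∀ j : ℕ, ContDiff ℝ ∞ ((dirDeriv v)^[j] g) := dirDeriv_iter_smooth hg
    rw [Function.iterate_succ_apply', ih]
    have hsummand : ∀ j ∈ Finset.range (k + 1), ContDiff ℝ ∞
        (fun x => (k.choose j : ℂ) * ((dirDeriv v)^[j] f x * (dirDeriv v)^[k - j] g x)) :=
      fun j _ => (contDiff_const.mul ((hF j).mul (hG (k - j))))
    rw [dirDeriv_sum (fun j hj => sm_diff (hsummand j hj))]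
    funext x
    have hterm : ∀ j ∈ Finset.range (k + 1),
        dirDeriv v (fun x => (k.choose j : ℂ) *
            ((dirDeriv v)^[j] f x * (dirDeriv v)^[k - j] g x)) x =
          (k.choose j : ℂ) * ((dirDeriv v)^[j + 1] f x * (dirDeriv v)^[k - j] g x)
          + (k.choose j : ℂ) * ((dirDeriv v)^[j] f x * (dirDeriv v)^[(k - j) + 1] g x) := by
      intro j _
      rw [dirDeriv_const_mul (sm_diff ((hF j).mul (hG (k - j)))),
        dirDeriv_mul (sm_diff (hF j)) (sm_diff (hG (k - j)))]
      rw [← Function.iterate_succ_apply' (dirDeriv v) j f,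
        ← Function.iterate_succ_apply' (dirDeriv v) (k - j) g]
      ring
    rw [Finset.sum_congr rfl hterm, Finset.sum_add_distrib]
    -- now pure binomial algebra
    have e1 : ∑ j ∈ Finset.range (k + 1),
        (k.choose j : ℂ) * ((dirDeriv v)^[j] f x * (dirDeriv v)^[(k - j) + 1] g x)
        = (dirDeriv v)^[0] f x * (dirDeriv v)^[k + 1] g x
          + ∑ j ∈ Finset.range k,
            (k.choose (j + 1) : ℂ) * ((dirDeriv v)^[j + 1] f x * (dirDeriv v)^[k - j] g x) := by
      rw [Finset.sum_range_succ' (fun j => (k.choose j : ℂ) *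
        ((dirDeriv v)^[j] f x * (dirDeriv v)^[(k - j) + 1] g x))]
      rw [add_comm]
      congr 1
      · simp
      · refine Finset.sum_congr rfl (fun j hj => ?_)
        have : k - (j + 1) + 1 = k - j := by
          have := Finset.mem_range.mp hj; omega
        rw [this]
    have e2 : ∑ j ∈ Finset.range (k + 1),
        (k.choose j : ℂ) * ((dirDeriv v)^[j + 1] f x * (dirDeriv v)^[k - j] g x)
        = ∑ j ∈ Finset.range (k + 1),
            (k.choose j : ℂ) * ((dirDeriv v)^[j + 1] f x * (dirDeriv v)^[k + 1 - (j + 1)] g x) := by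
      refine Finset.sum_congr rfl (fun j hj => ?_)
      have : k + 1 - (j + 1) = k - j := by omega
      rw [this]
    rw [e1, e2]
    -- RHS: peel off j = 0
    rw [Finset.sum_range_succ' (fun j => ((k+1).choose j : ℂ) *
      ((dirDeriv v)^[j] f x * (dirDeriv v)^[k + 1 - j] g x))]
    simp only [Nat.choose_succ_succ, Nat.cast_add, Nat.choose_zero_right, Nat.cast_one, one_mul,
      Nat.sub_zero]
    have e3 : ∑ j ∈ Finset.range (k + 1),
        ((k.choose j : ℂ) + (k.choose (j + 1) : ℂ)) *
          ((dirDeriv v)^[j + 1] f x * (dirDeriv v)^[k + 1 - (j + 1)] g x)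
        = ∑ j ∈ Finset.range (k + 1),
            (k.choose j : ℂ) * ((dirDeriv v)^[j + 1] f x * (dirDeriv v)^[k + 1 - (j + 1)] g x)
          + ∑ j ∈ Finset.range (k + 1),
            (k.choose (j + 1) : ℂ) * ((dirDeriv v)^[j + 1] f x * (dirDeriv v)^[k + 1 - (j + 1)] g x) := by
      rw [← Finset.sum_add_distrib]
      exact Finset.sum_congr rfl (fun j _ => by ring)
    rw [e3]
    have e4 : ∑ j ∈ Finset.range (k + 1),
        (k.choose (j + 1) : ℂ) * ((dirDeriv v)^[j + 1] f x * (dirDeriv v)^[k + 1 - (j + 1)] g x)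
        = ∑ j ∈ Finset.range k,
            (k.choose (j + 1) : ℂ) * ((dirDeriv v)^[j + 1] f x * (dirDeriv v)^[k - j] g x) := by
      rw [Finset.sum_range_succ]
      simp only [Nat.choose_succ_self, Nat.cast_zero, zero_mul, add_zero]
      refine Finset.sum_congr rfl (fun j hj => ?_)
      have : k + 1 - (j + 1) = k - j := by omega
      rw [this]
    rw [e4]
    ring

end Leibniz1D
section Mdl

variable {M : ℕ}

/-- Multi-derivative along a list of coordinates. -/
noncomputable def mdl (l : List (Fin M)) (α : Fin M → ℕ)
    (f : EuclideanSpace ℝ (Fin M) → ℂ) : EuclideanSpace ℝ (Fin M) → ℂ :=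
  (l.foldr (fun i g => (dirDeriv (EuclideanSpace.single i 1))^[α i] ∘ g) id) f

lemma multiDeriv_eq_mdl (α : Fin M → ℕ) (f : EuclideanSpace ℝ (Fin M) → ℂ) :
    multiDeriv α f = mdl (List.finRange M) α f := rfl

@[simp] lemma mdl_nil (α : Fin M → ℕ) (f : EuclideanSpace ℝ (Fin M) → ℂ) :
    mdl ([] : List (Fin M)) α f = f := rfl

lemma mdl_cons (i : Fin M) (l : List (Fin M)) (α : Fin M → ℕ)
    (f : EuclideanSpace ℝ (Fin M) → ℂ) :
    mdl (i :: l) α f = (dirDeriv (EuclideanSpace.single i 1))^[α i] (mdl l α f) := rfl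

lemma mdl_smooth {l : List (Fin M)} {α : Fin M → ℕ} {f : EuclideanSpace ℝ (Fin M) → ℂ}
    (hf : ContDiff ℝ ∞ f) : ContDiff ℝ ∞ (mdl l α f) := by
  induction l with
  | nil => exact hf
  | cons i l ih => rw [mdl_cons]; exact dirDeriv_iter_smooth ih _

lemma mdl_congr {l : List (Fin M)} {α β : Fin M → ℕ} (h : ∀ i ∈ l, α i = β i)
    (f : EuclideanSpace ℝ (Fin M) → ℂ) : mdl l α f = mdl l β f := by
  induction l with
  | nil => rfl
  | cons i l ih =>
    rw [mdl_cons, mdl_cons, h i (by simp), ih (fun j hj => h j (by simp [hj]))]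

lemma mdl_of_zero {l : List (Fin M)} {α : Fin M → ℕ} (h : ∀ i ∈ l, α i = 0)
    (f : EuclideanSpace ℝ (Fin M) → ℂ) : mdl l α f = f := by
  induction l with
  | nil => rfl
  | cons i l ih =>
    rw [mdl_cons, h i (by simp), Function.iterate_zero_apply,
      ih (fun j hj => h j (by simp [hj]))]

lemma mdl_zero_fun (l : List (Fin M)) (α : Fin M → ℕ) :
    mdl l α (fun _ => (0 : ℂ)) = fun _ => 0 := by
  induction l with
  | nil => rfl
  | cons i l ih => rw [mdl_cons, ih, dirDeriv_iter_zero]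

lemma mdl_const_of_ne {l : List (Fin M)} {α : Fin M → ℕ} (h : ∃ i ∈ l, α i ≠ 0) (c : ℂ) :
    mdl l α (fun _ => c) = fun _ => 0 := by
  induction l with
  | nil => obtain ⟨i, hi, _⟩ := h; simp at hi
  | cons i l ih =>
    rw [mdl_cons]
    by_cases hl : ∃ j ∈ l, α j ≠ 0
    · rw [ih hl, dirDeriv_iter_zero]
    · push_neg at hl
      have hi : α i ≠ 0 := by
        obtain ⟨j, hj, hj0⟩ := h
        rcases List.mem_cons.mp hj with rfl | hj'
        · exact hj0
        · exact absurd (hl j hj') hj0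
      rw [mdl_of_zero (fun j hj => hl j hj), dirDeriv_iter_const _ _ hi]

/-- Box of multi-indices supported on `l` and `≤ α`. -/
def mbox (l : List (Fin M)) (α : Fin M → ℕ) : Finset (Fin M → ℕ) :=
  Fintype.piFinset (fun i => if i ∈ l then Finset.range (α i + 1) else {0})

lemma mem_mbox {l : List (Fin M)} {α β : Fin M → ℕ} :
    β ∈ mbox l α ↔ ∀ i, (i ∈ l → β i ≤ α i) ∧ (i ∉ l → β i = 0) := by
  rw [mbox, Fintype.mem_piFinset]
  refine forall_congr' fun i => ?_
  by_cases hi : i ∈ l <;> simp [hi, Nat.lt_succ_iff]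

lemma zero_mem_mbox (l : List (Fin M)) (α : Fin M → ℕ) : 0 ∈ mbox l α := by
  rw [mem_mbox]; intro i; simp

lemma mbox_nil (α : Fin M → ℕ) : mbox ([] : List (Fin M)) α = {0} := by
  ext β
  rw [mem_mbox, Finset.mem_singleton]
  constructor
  · intro h; funext i; exact (h i).2 (by simp)
  · rintro rfl i; simp

/-- Multi-binomial coefficient. -/
def cf (α β : Fin M → ℕ) : ℕ := ∏ i, (α i).choose (β i)

@[simp] lemma cf_zero (α : Fin M → ℕ) : cf α 0 = 1 := by simp [cf]

lemma cf_update (α β : Fin M → ℕ) (i : Fin M) (j : ℕ) (hβ : β i = 0) :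
    cf α (Function.update β i j) = (α i).choose j * cf α β := by
  have h1 : cf α (Function.update β i j)
      = (α i).choose j * ∏ x ∈ Finset.univ.erase i, (α x).choose (β x) := by
    rw [cf, ← Finset.mul_prod_erase Finset.univ _ (Finset.mem_univ i)]
    congr 1
    · simp
    · exact Finset.prod_congr rfl fun x hx => by
        rw [Function.update_of_ne (Finset.mem_erase.mp hx).1]
  have h2 : cf α β = ∏ x ∈ Finset.univ.erase i, (α x).choose (β x) := by
    rw [cf, ← Finset.mul_prod_erase Finset.univ _ (Finset.mem_univ i), hβ,
      Nat.choose_zero_right, one_mul]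
  rw [h1, h2]

/-- Multivariate Leibniz formula. -/
lemma mdl_mul {l : List (Fin M)} (hl : l.Nodup) (α : Fin M → ℕ)
    {f g : EuclideanSpace ℝ (Fin M) → ℂ} (hf : ContDiff ℝ ∞ f) (hg : ContDiff ℝ ∞ g) :
    mdl l α (fun x => f x * g x) =
      fun x => ∑ β ∈ mbox l α, (cf α β : ℂ) * (mdl l β f x * mdl l (α - β) g x) := by
  induction l with
  | nil =>
    funext x
    rw [mdl_nil, mbox_nil, Finset.sum_singleton]
    simp
  | cons i l ih =>
    have hi : i ∉ l := (List.nodup_cons.mp hl).1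
    have hln : l.Nodup := (List.nodup_cons.mp hl).2
    rw [mdl_cons, ih hln]
    have hsm : ∀ β ∈ mbox l α, ContDiff ℝ ∞
        (fun x => (cf α β : ℂ) * (mdl l β f x * mdl l (α - β) g x)) :=
      fun β _ => contDiff_const.mul ((mdl_smooth hf).mul (mdl_smooth hg))
    rw [dirDeriv_iter_sum (α i) hsm]
    funext x
    have hterm : ∀ β ∈ mbox l α,
        (dirDeriv (EuclideanSpace.single i 1))^[α i]
          (fun x => (cf α β : ℂ) * (mdl l β f x * mdl l (α - β) g x)) x
        = ∑ j ∈ Finset.range (α i + 1), (cf α β : ℂ) * ((α i).choose j : ℂ) *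
            ((dirDeriv (EuclideanSpace.single i 1))^[j] (mdl l β f) x *
             (dirDeriv (EuclideanSpace.single i 1))^[α i - j] (mdl l (α - β) g) x) := by
      intro β _
      rw [dirDeriv_iter_const_mul ((mdl_smooth hf).mul (mdl_smooth hg)),
        dirDeriv_iter_mul (α i) (mdl_smooth hf) (mdl_smooth hg)]
      dsimp only
      rw [Finset.mul_sum]
      exact Finset.sum_congr rfl fun j _ => by ring
    rw [Finset.sum_congr rfl hterm]
    rw [← Finset.sum_product']
    refine Finset.sum_nbij' (fun p => Function.update p.1 i p.2)
      (fun β' => (Function.update β' i 0, β' i)) ?_ ?_ ?_ ?_ ?_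
    · rintro ⟨β, j⟩ hp
      dsimp only
      rw [Finset.mem_product] at hp
      obtain ⟨hβ, hj⟩ := hp
      rw [mem_mbox] at hβ
      rw [mem_mbox]
      rw [Finset.mem_range, Nat.lt_succ_iff] at hj
      intro t
      by_cases hti : t = i
      · subst hti
        simp only [Function.update_self]
        exact ⟨fun _ => hj, fun hmem => absurd ((List.mem_cons_self (a := t) (l := l))) hmem⟩
      · simp only [Function.update_of_ne hti]
        refine ⟨fun htl => (hβ t).1 ?_, fun htl => (hβ t).2 ?_⟩
        · rcases List.mem_cons.mp htl with h' | h'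
          · exact absurd h' hti
          · exact h'
        · exact fun hl' => htl (List.mem_cons_of_mem i hl')
    · intro β' hβ'
      rw [mem_mbox] at hβ'
      rw [Finset.mem_product, mem_mbox, Finset.mem_range, Nat.lt_succ_iff]
      refine ⟨fun t => ?_, (hβ' i).1 ((List.mem_cons_self (a := i) (l := l)))⟩
      by_cases hti : t = i
      · subst hti
        simp only [Function.update_self]
        refine ⟨fun htl => absurd htl hi, ?_⟩
        simp
      · simp only [Function.update_of_ne hti]
        refine ⟨fun htl => (hβ' t).1 (List.mem_cons_of_mem i htl), fun htl => (hβ' t).2 ?_⟩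
        intro ht
        rcases List.mem_cons.mp ht with h' | h'
        · exact hti h'
        · exact htl h'
    · rintro ⟨β, j⟩ hp
      dsimp only
      rw [Finset.mem_product] at hp
      have hβi : β i = 0 := ((mem_mbox.mp hp.1) i).2 hi
      rw [Prod.mk.injEq]
      refine ⟨?_, Function.update_self i j β⟩
      funext t
      by_cases hti : t = i
      · subst hti
        rw [Function.update_self, hβi]
      · rw [Function.update_of_ne hti, Function.update_of_ne hti]
    · intro β' hβ'
      dsimp only
      rw [Function.update_idem]
      funext t
      by_cases hti : t = i
      · subst hti
        rw [Function.update_self]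
      · rw [Function.update_of_ne hti]
    · rintro ⟨β, j⟩ hp
      dsimp only
      rw [Finset.mem_product] at hp
      obtain ⟨hβ, hj⟩ := hp
      have hβi : β i = 0 := ((mem_mbox.mp hβ) i).2 hi
      have hcf : (cf α (Function.update β i j) : ℂ) = ((α i).choose j : ℂ) * (cf α β : ℂ) := by
        rw [cf_update α β i j hβi]; push_cast; ring
      have hmf : mdl (i :: l) (Function.update β i j) f
          = (dirDeriv (EuclideanSpace.single i 1))^[j] (mdl l β f) := by
        rw [mdl_cons, Function.update_self,
          mdl_congr (α := Function.update β i j) (β := β)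
            (fun t htl => Function.update_of_ne (show t ≠ i from fun h' => hi (h' ▸ htl)) j β) f]
      have hmg : mdl (i :: l) (α - Function.update β i j) g
          = (dirDeriv (EuclideanSpace.single i 1))^[α i - j] (mdl l (α - β) g) := by
        rw [mdl_cons]
        have h1 : (α - Function.update β i j) i = α i - j := by
          simp [Pi.sub_apply]
        rw [h1, mdl_congr (α := α - Function.update β i j) (β := α - β)
          (fun t htl => by
            have hti : t ≠ i := fun h' => hi (h' ▸ htl)
            simp [Pi.sub_apply, Function.update_of_ne hti]) g]
      rw [hmf, hmg, hcf]
      ring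

end Mdl
section Comb

variable {M : ℕ}

lemma choose_mul_choose_le (a b c e : ℕ) : a.choose b * c.choose e ≤ (a + c).choose (b + e) := by
  rw [Nat.add_choose_eq]
  exact Finset.single_le_sum (f := fun ij : ℕ × ℕ => a.choose ij.1 * c.choose ij.2)
    (fun i _ => Nat.zero_le _) (a := (b, e)) (by simp [Finset.mem_antidiagonal])

def bigbox (α : Fin M → ℕ) : Finset (Fin M → ℕ) :=
  Fintype.piFinset (fun i => Finset.range (α i + 1))

lemma mbox_finRange (α : Fin M → ℕ) : mbox (List.finRange M) α = bigbox α := by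
  unfold mbox bigbox
  congr 1
  funext i
  simp [List.mem_finRange]

lemma mem_bigbox {α β : Fin M → ℕ} : β ∈ bigbox α ↔ ∀ i, β i ≤ α i := by
  simp [bigbox, Fintype.mem_piFinset, Nat.lt_succ_iff]

lemma sum_add_sum_sub {α β : Fin M → ℕ} (h : ∀ i, β i ≤ α i) :
    (∑ i, β i) + (∑ i, (α - β) i) = ∑ i, α i := by
  rw [← Finset.sum_add_distrib]
  exact Finset.sum_congr rfl fun i _ => by
    have := h i
    simp only [Pi.sub_apply]
    omega

lemma one_le_sum_of_ne_zero {β : Fin M → ℕ} (h : β ≠ 0) : 1 ≤ ∑ i, β i := by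
  obtain ⟨i, hi⟩ := Function.ne_iff.mp h
  have : β i ≤ ∑ j, β j :=
    Finset.single_le_sum (fun j _ => Nat.zero_le _) (Finset.mem_univ i)
  have : 1 ≤ β i := by
    simp only [Pi.zero_apply] at hi
    omega
  omega

lemma prod_choose_le (α β : Fin M → ℕ) (s : Finset (Fin M)) :
    ∏ i ∈ s, (α i).choose (β i) ≤ (∑ i ∈ s, α i).choose (∑ i ∈ s, β i) := by
  induction s using Finset.induction with
  | empty => simp
  | @insert a s ha ih =>
    rw [Finset.prod_insert ha, Finset.sum_insert ha, Finset.sum_insert ha]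
    calc (α a).choose (β a) * ∏ i ∈ s, (α i).choose (β i)
        ≤ (α a).choose (β a) * (∑ i ∈ s, α i).choose (∑ i ∈ s, β i) :=
          Nat.mul_le_mul_left _ ih
      _ ≤ (α a + ∑ i ∈ s, α i).choose (β a + ∑ i ∈ s, β i) := choose_mul_choose_le _ _ _ _
  
lemma cf_le (α β : Fin M → ℕ) : cf α β ≤ (∑ i, α i).choose (∑ i, β i) :=
  prod_choose_le α β Finset.univ

lemma sum_pow_two_le (a : ℕ) : ∑ j ∈ Finset.range (a + 1), 2 ^ j ≤ 2 ^ a * 2 := by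
  induction a with
  | zero => simp
  | succ a ih =>
    rw [Finset.sum_range_succ]
    calc (∑ j ∈ Finset.range (a + 1), 2 ^ j) + 2 ^ (a + 1)
        ≤ 2 ^ a * 2 + 2 ^ (a + 1) := by omega
      _ = 2 ^ (a + 1) * 2 := by ring

lemma sum_bigbox_pow (α : Fin M → ℕ) :
    ∑ β ∈ bigbox α, 2 ^ (∑ i, (α - β) i) ≤ 2 ^ ((∑ i, α i) + M) := by
  have h1 : ∀ β : Fin M → ℕ, (2 : ℕ) ^ (∑ i, (α - β) i) = ∏ i, 2 ^ ((α - β) i) := by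
    intro β
    rw [Finset.prod_pow_eq_pow_sum]
  calc ∑ β ∈ bigbox α, 2 ^ (∑ i, (α - β) i)
      = ∑ β ∈ Fintype.piFinset (fun i => Finset.range (α i + 1)), ∏ i, 2 ^ (α i - β i) := by
        refine Finset.sum_congr rfl fun β _ => ?_
        rw [h1]
        exact Finset.prod_congr rfl fun i _ => by simp [Pi.sub_apply]
    _ = ∏ i, ∑ j ∈ Finset.range (α i + 1), 2 ^ (α i - j) :=
        (Finset.prod_univ_sum (fun i => Finset.range (α i + 1)) (fun i j => 2 ^ (α i - j))).symm
    _ ≤ ∏ i : Fin M, 2 ^ (α i) * 2 := by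
        refine Finset.prod_le_prod' fun i _ => ?_
        have := Finset.sum_range_reflect (fun j => (2:ℕ) ^ j) (α i + 1)
        have heq : ∑ j ∈ Finset.range (α i + 1), (2:ℕ) ^ (α i - j)
            = ∑ j ∈ Finset.range (α i + 1), 2 ^ j := by
          rw [← this]
          refine Finset.sum_congr rfl fun j hj => ?_
          have := Finset.mem_range.mp hj
          congr 1 <;> omega
        rw [heq]
        exact sum_pow_two_le (α i)
    _ = 2 ^ ((∑ i, α i) + M) := by
        rw [Finset.prod_mul_distrib, Finset.prod_pow_eq_pow_sum, Finset.prod_const]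
        simp [pow_add, Finset.card_univ]

section WithA

variable (A : ℕ → ℝ) (hApos : ∀ p, 0 < A p) (hA0 : A 0 = 1) (hA1 : A 1 = 1)
variable (hM4 : ∀ p : ℕ, 1 ≤ p →
      (A p / (Nat.factorial p)) ^ 2 ≤
        (A (p - 1) / (Nat.factorial (p - 1))) * (A (p + 1) / (Nat.factorial (p + 1))))

include hApos hA0 hM4 in
lemma supermult : ∀ p q : ℕ, (((p + q).choose p : ℝ)) * A p * A q ≤ A (p + q) := by
  set a : ℕ → ℝ := fun p => A p / (Nat.factorial p) with ha
  have hfac : ∀ p : ℕ, (0:ℝ) < (Nat.factorial p : ℝ) := fun p => by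
    exact_mod_cast Nat.factorial_pos p
  have hapos : ∀ p, 0 < a p := fun p => div_pos (hApos p) (hfac p)
  have hr : ∀ p : ℕ, a (p + 1) / a p ≤ a (p + 2) / a (p + 1) := by
    intro p
    have h := hM4 (p + 1) (by omega)
    simp only [Nat.add_sub_cancel] at h
    rw [div_le_div_iff₀ (hapos p) (hapos (p + 1))]
    calc a (p + 1) * a (p + 1) = a (p + 1) ^ 2 := by ring
      _ ≤ a p * a (p + 2) := h
      _ = a (p + 2) * a p := by ring
  have hrmono : ∀ p q : ℕ, p ≤ q → a (p + 1) / a p ≤ a (q + 1) / a q := by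
    intro p q hpq
    induction q with
    | zero =>
      have hp0 : p = 0 := Nat.le_zero.mp hpq
      subst hp0
      exact le_refl _
    | succ q ih =>
      rcases Nat.lt_or_ge p (q + 1) with h' | h'
      · exact le_trans (ih (by omega)) (hr q)
      · have : p = q + 1 := by omega
        subst this; exact le_refl _
  have hsuper : ∀ q p : ℕ, a p * a q ≤ a (p + q) := by
    intro q
    induction q with
    | zero =>
      intro p
      have : a 0 = 1 := by simp [ha, hA0]
      rw [this]
      simp
    | succ q ih =>
      intro p
      have h1 : a q * (a (q + 1) / a q) = a (q + 1) := by
        rw [mul_comm, div_mul_cancel₀ _ (hapos q).ne']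
      have h2 : a (p + q) * (a (p + q + 1) / a (p + q)) = a (p + q + 1) := by
        rw [mul_comm, div_mul_cancel₀ _ (hapos (p + q)).ne']
      have h3 : a (q + 1) / a q ≤ a (p + q + 1) / a (p + q) := hrmono q (p + q) (by omega)
      calc a p * a (q + 1) = (a p * a q) * (a (q + 1) / a q) := by rw [mul_assoc, h1]
        _ ≤ a (p + q) * (a (q + 1) / a q) :=
            mul_le_mul_of_nonneg_right (ih p) (le_of_lt (div_pos (hapos _) (hapos _)))
        _ ≤ a (p + q) * (a (p + q + 1) / a (p + q)) :=
            mul_le_mul_of_nonneg_left h3 (le_of_lt (hapos _))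
        _ = a (p + q + 1) := h2

  intro p q
  have h := hsuper q p
  rw [ha] at h
  simp only at h
  have hchoose : ((p + q).choose p : ℝ) * (Nat.factorial p) * (Nat.factorial q)
      = (Nat.factorial (p + q)) := by
    have := Nat.choose_mul_factorial_mul_factorial (Nat.le_add_right p q)
    rw [Nat.add_sub_cancel_left] at this
    exact_mod_cast this
  have h2 : A p / (Nat.factorial p) * (A q / (Nat.factorial q)) ≤ A (p + q) / (Nat.factorial (p + q)) := h
  rw [div_mul_div_comm, div_le_div_iff₀ (by positivity) (hfac _)] at h2
  have hpq : (0:ℝ) < (Nat.factorial p : ℝ) * (Nat.factorial q : ℝ) := by positivity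
  have key : ((p + q).choose p : ℝ) * A p * A q * ((Nat.factorial p : ℝ) * (Nat.factorial q : ℝ))
      ≤ A (p + q) * ((Nat.factorial p : ℝ) * (Nat.factorial q : ℝ)) := by
    calc ((p + q).choose p : ℝ) * A p * A q * ((Nat.factorial p : ℝ) * (Nat.factorial q : ℝ))
        = (A p * A q) * (((p + q).choose p : ℝ) * (Nat.factorial p) * (Nat.factorial q)) := by
          ring
      _ = (A p * A q) * (Nat.factorial (p + q)) := by rw [hchoose]
      _ ≤ A (p + q) * ((Nat.factorial p : ℝ) * (Nat.factorial q : ℝ)) := h2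
  exact le_of_mul_le_mul_right key hpq

end WithA

end Comb
section TTdef

variable {M : ℕ}

noncomputable def TT (A : ℕ → ℝ) : ℕ → (Fin M → ℕ) → ℝ
  | 0, α => if α = 0 then 1 else 0
  | (k+1), α => ∑ β ∈ (bigbox α).erase 0, (cf α β : ℝ) * A (∑ i, β i) * TT A k (α - β)

lemma TT_succ (A : ℕ → ℝ) (k : ℕ) (α : Fin M → ℕ) :
    TT A (k + 1) α
      = ∑ β ∈ (bigbox α).erase 0, (cf α β : ℝ) * A (∑ i, β i) * TT A k (α - β) := by
  rw [TT]

lemma TT_nonneg (A : ℕ → ℝ) (hApos : ∀ p, 0 < A p) : ∀ (k : ℕ) (α : Fin M → ℕ), 0 ≤ TT A k α := by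
  intro k
  induction k with
  | zero =>
    intro α
    by_cases h : α = 0 <;> simp [TT, h]
  | succ k ih =>
    intro α
    rw [TT]
    refine Finset.sum_nonneg fun β _ => ?_
    exact mul_nonneg (mul_nonneg (Nat.cast_nonneg _) (hApos _).le) (ih _)

lemma TT_eq_zero (A : ℕ → ℝ) :
    ∀ (k : ℕ) (α : Fin M → ℕ), (∑ i, α i) < k → TT A k α = 0 := by
  intro k
  induction k with
  | zero => intro α hα; omega
  | succ k ih =>
    intro α hα
    rw [TT]
    refine Finset.sum_eq_zero fun β hβ => ?_
    obtain ⟨hβ0, hβb⟩ := Finset.mem_erase.mp hβ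
    have hle := mem_bigbox.mp hβb
    have hsum := sum_add_sum_sub (α := α) (β := β) hle
    have h1 := one_le_sum_of_ne_zero hβ0
    have : (∑ i, (α - β) i) < k := by omega
    rw [ih _ this, mul_zero]

lemma TT_le (A : ℕ → ℝ) (hApos : ∀ p, 0 < A p) (hA0 : A 0 = 1)
    (hM4 : ∀ p : ℕ, 1 ≤ p → (A p / (Nat.factorial p)) ^ 2 ≤
        (A (p - 1) / (Nat.factorial (p - 1))) * (A (p + 1) / (Nat.factorial (p + 1)))) :
    ∀ (k : ℕ) (α : Fin M → ℕ),
      TT A k α ≤ A (∑ i, α i) * 2 ^ (∑ i, α i) * ((2:ℝ) ^ M) ^ k := by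
  have cfAA_le : ∀ {α β : Fin M → ℕ}, β ∈ bigbox α →
      (cf α β : ℝ) * A (∑ i, β i) * A (∑ i, (α - β) i) ≤ A (∑ i, α i) := by
    intro α β hβ
    have hle := mem_bigbox.mp hβ
    have hpq := sum_add_sum_sub (α := α) (β := β) hle
    have h1 : (cf α β : ℝ) ≤ ((∑ i, α i).choose (∑ i, β i) : ℝ) := by
      exact_mod_cast cf_le α β
    calc (cf α β : ℝ) * A (∑ i, β i) * A (∑ i, (α - β) i)
        ≤ ((∑ i, α i).choose (∑ i, β i) : ℝ) * A (∑ i, β i) * A (∑ i, (α - β) i) := by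
          apply mul_le_mul_of_nonneg_right _ (hApos _).le
          exact mul_le_mul_of_nonneg_right h1 (hApos _).le
      _ ≤ A (∑ i, α i) := by
          rw [← hpq]
          exact supermult A hApos hA0 hM4 (∑ i, β i) (∑ i, (α - β) i)
  intro k
  induction k with
  | zero =>
    intro α
    by_cases h : α = 0
    · subst h
      have h0 : (∑ i, (0 : Fin M → ℕ) i) = 0 := by simp
      simp [TT, h0, hA0]
    · have : TT A 0 α = 0 := by simp [TT, h]
      rw [this]
      exact mul_nonneg (mul_nonneg (hApos _).le (by positivity)) (by positivity)
  | succ k ih =>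
    intro α
    rw [TT]
    have step1 : ∀ β ∈ (bigbox α).erase 0,
        (cf α β : ℝ) * A (∑ i, β i) * TT A k (α - β)
        ≤ A (∑ i, α i) * ((2:ℝ) ^ (∑ i, (α - β) i) * ((2:ℝ) ^ M) ^ k) := by
      intro β hβ
      obtain ⟨hβ0, hβb⟩ := Finset.mem_erase.mp hβ
      calc (cf α β : ℝ) * A (∑ i, β i) * TT A k (α - β)
          ≤ (cf α β : ℝ) * A (∑ i, β i) *
              (A (∑ i, (α - β) i) * 2 ^ (∑ i, (α - β) i) * ((2:ℝ) ^ M) ^ k) := by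
            exact mul_le_mul_of_nonneg_left (ih (α - β))
              (mul_nonneg (Nat.cast_nonneg _) (hApos _).le)
        _ = ((cf α β : ℝ) * A (∑ i, β i) * A (∑ i, (α - β) i)) *
              ((2:ℝ) ^ (∑ i, (α - β) i) * ((2:ℝ) ^ M) ^ k) := by ring
        _ ≤ A (∑ i, α i) * ((2:ℝ) ^ (∑ i, (α - β) i) * ((2:ℝ) ^ M) ^ k) := by
            exact mul_le_mul_of_nonneg_right (cfAA_le hβb) (by positivity)
    calc ∑ β ∈ (bigbox α).erase 0, (cf α β : ℝ) * A (∑ i, β i) * TT A k (α - β)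
        ≤ ∑ β ∈ (bigbox α).erase 0,
            A (∑ i, α i) * ((2:ℝ) ^ (∑ i, (α - β) i) * ((2:ℝ) ^ M) ^ k) :=
          Finset.sum_le_sum step1
      _ = A (∑ i, α i) * ((2:ℝ) ^ M) ^ k *
            ∑ β ∈ (bigbox α).erase 0, (2:ℝ) ^ (∑ i, (α - β) i) := by
          rw [Finset.mul_sum]
          exact Finset.sum_congr rfl fun β _ => by ring
      _ ≤ A (∑ i, α i) * ((2:ℝ) ^ M) ^ k * ∑ β ∈ bigbox α, (2:ℝ) ^ (∑ i, (α - β) i) := by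
          refine mul_le_mul_of_nonneg_left ?_
            (mul_nonneg (hApos _).le (by positivity))
          refine Finset.sum_le_sum_of_subset_of_nonneg (Finset.erase_subset _ _) ?_
          intro β _ _
          positivity
      _ ≤ A (∑ i, α i) * ((2:ℝ) ^ M) ^ k * (2:ℝ) ^ ((∑ i, α i) + M) := by
          refine mul_le_mul_of_nonneg_left ?_
            (mul_nonneg (hApos _).le (by positivity))
          have := sum_bigbox_pow α
          calc (∑ β ∈ bigbox α, (2:ℝ) ^ (∑ i, (α - β) i))
              = ((∑ β ∈ bigbox α, 2 ^ (∑ i, (α - β) i) : ℕ) : ℝ) := by push_cast; rfl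
            _ ≤ ((2 ^ ((∑ i, α i) + M) : ℕ) : ℝ) := by exact_mod_cast this
            _ = (2:ℝ) ^ ((∑ i, α i) + M) := by push_cast; rfl
      _ = A (∑ i, α i) * 2 ^ (∑ i, α i) * ((2:ℝ) ^ M) ^ (k + 1) := by
          rw [pow_add, pow_succ]
          ring

noncomputable def SS (A : ℕ → ℝ) (C : ℝ) (n : ℕ) (α : Fin M → ℕ) : ℝ :=
  ∑ k ∈ Finset.range (n + 1), (n.choose k : ℝ) * C ^ k * TT A k α

lemma SS_nonneg (A : ℕ → ℝ) (hApos : ∀ p, 0 < A p) {C : ℝ} (hC : 0 ≤ C) (n : ℕ)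
    (α : Fin M → ℕ) : 0 ≤ SS A C n α := by
  refine Finset.sum_nonneg fun k _ => ?_
  have := TT_nonneg A hApos k α
  positivity

lemma SS_zero (A : ℕ → ℝ) (C : ℝ) (α : Fin M → ℕ) : SS A C 0 α = TT A 0 α := by
  simp [SS]

lemma SS_succ (A : ℕ → ℝ) (C : ℝ) (n : ℕ) (α : Fin M → ℕ) :
    SS A C (n + 1) α = SS A C n α + C * ∑ β ∈ (bigbox α).erase 0,
      (cf α β : ℝ) * A (∑ i, β i) * SS A C n (α - β) := by
  have h2 : C * ∑ β ∈ (bigbox α).erase 0, (cf α β : ℝ) * A (∑ i, β i) * SS A C n (α - β)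
      = ∑ k ∈ Finset.range (n + 1), (n.choose k : ℝ) * C ^ (k + 1) * TT A (k + 1) α := by
    unfold SS
    rw [Finset.mul_sum]
    have hswap : ∀ β ∈ (bigbox α).erase 0,
        C * ((cf α β : ℝ) * A (∑ i, β i) *
          ∑ k ∈ Finset.range (n + 1), (n.choose k : ℝ) * C ^ k * TT A k (α - β))
        = ∑ k ∈ Finset.range (n + 1),
            (n.choose k : ℝ) * C ^ (k + 1) * ((cf α β : ℝ) * A (∑ i, β i) * TT A k (α - β)) := by
      intro β _
      rw [Finset.mul_sum, Finset.mul_sum]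
      exact Finset.sum_congr rfl fun k _ => by ring
    rw [Finset.sum_congr rfl hswap, Finset.sum_comm]
    refine Finset.sum_congr rfl fun k _ => ?_
    rw [← Finset.mul_sum]
    rw [TT_succ]
  rw [h2]
  unfold SS
  rw [Finset.sum_range_succ' (fun k => ((n + 1).choose k : ℝ) * C ^ k * TT A k α)]
  rw [Finset.sum_range_succ' (fun k => (n.choose k : ℝ) * C ^ k * TT A k α)]
  simp only [Nat.choose_zero_right, Nat.cast_one, pow_zero, one_mul]
  rw [Finset.sum_range_succ (fun k => (n.choose k : ℝ) * C ^ (k + 1) * TT A (k + 1) α)]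
  have hz : TT A (n + 1) α * 0 = 0 := by ring
  have hsplit : ∑ j ∈ Finset.range n, ((n + 1).choose (j + 1) : ℝ) * C ^ (j + 1) * TT A (j + 1) α
      + ((n + 1).choose (n + 1) : ℝ) * C ^ (n + 1) * TT A (n + 1) α
      = ∑ j ∈ Finset.range n, (((n.choose j : ℝ) + (n.choose (j + 1) : ℝ)) * C ^ (j + 1) * TT A (j + 1) α)
        + (n.choose n : ℝ) * C ^ (n + 1) * TT A (n + 1) α := by
    congr 1
    · refine Finset.sum_congr rfl fun j _ => ?_
      congr 2
      rw [Nat.choose_succ_succ]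
      push_cast
      ring
    · simp
  have hL : ∑ j ∈ Finset.range (n + 1), ((n + 1).choose (j + 1) : ℝ) * C ^ (j + 1) * TT A (j + 1) α
      = ∑ j ∈ Finset.range n, ((n + 1).choose (j + 1) : ℝ) * C ^ (j + 1) * TT A (j + 1) α
        + ((n + 1).choose (n + 1) : ℝ) * C ^ (n + 1) * TT A (n + 1) α :=
    Finset.sum_range_succ _ n
  rw [hL, hsplit]
  have hR : ∑ j ∈ Finset.range n, (n.choose (j + 1) : ℝ) * C ^ (j + 1) * TT A (j + 1) α
      + ∑ j ∈ Finset.range n, (n.choose j : ℝ) * C ^ (j + 1) * TT A (j + 1) α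
      = ∑ j ∈ Finset.range n, (((n.choose j : ℝ) + (n.choose (j + 1) : ℝ)) * C ^ (j + 1) * TT A (j + 1) α) := by
    rw [← Finset.sum_add_distrib]
    exact Finset.sum_congr rfl fun j _ => by ring
  rw [← hR]
  ring

end TTdef
section Main

variable {M : ℕ}

lemma jbr_pos (w : EuclideanSpace ℝ (Fin M)) : 0 < jbr w := by
  unfold jbr
  apply Real.sqrt_pos.mpr
  positivity

lemma main_est (b : EuclideanSpace ℝ (Fin M) → ℂ) (hb : ContDiff ℝ ∞ b)
    (ρ h C : ℝ) (hh : 0 < h) (hC : 1 ≤ C) (A : ℕ → ℝ) (hApos : ∀ p, 0 < A p)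
    (hest : ∀ (α : Fin M → ℕ) (w : EuclideanSpace ℝ (Fin M)),
      ‖multiDeriv α b w‖ ≤
        C * h ^ (∑ i, α i) * A (∑ i, α i) * ‖b w‖ *
          jbr w ^ (-(ρ * (∑ i, α i)))) :
    ∀ (n : ℕ) (α : Fin M → ℕ) (w : EuclideanSpace ℝ (Fin M)),
      ‖multiDeriv α (fun w' => (b w') ^ n) w‖ ≤
        SS A C n α * h ^ (∑ i, α i) * jbr w ^ (-(ρ * (∑ i, α i))) *
          (‖b w‖) ^ n := by
  have hC0 : (0:ℝ) ≤ C := le_trans zero_le_one hC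
  intro n
  induction n with
  | zero =>
    intro α w
    by_cases hα : α = 0
    · subst hα
      have h1 : multiDeriv (0 : Fin M → ℕ) (fun w' => (b w') ^ 0) = fun w' => (b w') ^ 0 := by
        rw [multiDeriv_eq_mdl]
        exact mdl_of_zero (fun i _ => rfl) _
      rw [h1]
      have h0 : (∑ i, (0 : Fin M → ℕ) i) = 0 := by simp
      rw [SS_zero, h0]
      have h2 : TT A (M := M) 0 0 = 1 := by simp [TT]
      rw [h2]
      simp [Real.rpow_zero]
    · have h1 : multiDeriv α (fun w' => (b w') ^ 0) = fun _ => 0 := by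
        rw [multiDeriv_eq_mdl]
        have heq : (fun w' : EuclideanSpace ℝ (Fin M) => (b w') ^ 0) = (fun _ => (1:ℂ)) := by
          funext w'; simp
        rw [heq]
        apply mdl_const_of_ne
        obtain ⟨i, hi⟩ := Function.ne_iff.mp hα
        exact ⟨i, List.mem_finRange i, by simpa using hi⟩
      rw [h1]
      simp only [norm_zero]
      apply mul_nonneg
      apply mul_nonneg
      apply mul_nonneg (SS_nonneg A hApos hC0 0 α) (by positivity)
      · exact (Real.rpow_nonneg (jbr_pos w).le _)
      · positivity
  | succ n ih =>
    intro α w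
    have hbn : ContDiff ℝ ∞ (fun w' => (b w') ^ n) := hb.pow n
    have hrw : (fun w' : EuclideanSpace ℝ (Fin M) => (b w') ^ (n+1))
        = (fun w' => b w' * (b w') ^ n) := by
      funext w'; rw [pow_succ']
    rw [hrw, multiDeriv_eq_mdl, mdl_mul (List.nodup_finRange M) α hb hbn, mbox_finRange]
    dsimp only
    set L := List.finRange M with hL
    set g : EuclideanSpace ℝ (Fin M) → ℂ := fun w' => (b w') ^ n with hg
    have habs : ∀ β : Fin M → ℕ,
        ‖(cf α β : ℂ) * (mdl L β b w * mdl L (α - β) g w)‖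
        = (cf α β : ℝ) * (‖multiDeriv β b w‖ *
            ‖multiDeriv (α - β) g w‖) := by
      intro β
      rw [norm_mul, norm_mul, multiDeriv_eq_mdl, multiDeriv_eq_mdl]
      congr 1
      simp
    have tri : ‖∑ β ∈ bigbox α,
          (cf α β : ℂ) * (mdl L β b w * mdl L (α - β) g w)‖
        ≤ ∑ β ∈ bigbox α, (cf α β : ℝ) * (‖multiDeriv β b w‖ *
            ‖multiDeriv (α - β) g w‖) := by
      refine le_trans (norm_sum_le _ _) ?_
      exact le_of_eq (Finset.sum_congr rfl fun β _ => habs β)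
    refine le_trans tri ?_
    rw [← Finset.add_sum_erase _ _ (by rw [mem_bigbox]; intro i; simp : (0 : Fin M → ℕ) ∈ bigbox α)]
    -- bound the β = 0 term
    have hzero : (cf α (0 : Fin M → ℕ) : ℝ) * (‖multiDeriv 0 b w‖ *
          ‖multiDeriv (α - 0) g w‖)
        ≤ SS A C n α * h ^ (∑ i, α i) * jbr w ^ (-(ρ * (∑ i, α i))) *
            (‖b w‖) ^ (n + 1) := by
      have hm0 : multiDeriv (0 : Fin M → ℕ) b = b := by
        rw [multiDeriv_eq_mdl]; exact mdl_of_zero (fun i _ => rfl) _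
      have hsub0 : α - (0 : Fin M → ℕ) = α := by
        funext i; simp
      rw [cf_zero, hm0, hsub0, Nat.cast_one, one_mul]
      calc ‖b w‖ * ‖multiDeriv α g w‖
          ≤ ‖b w‖ * (SS A C n α * h ^ (∑ i, α i) *
              jbr w ^ (-(ρ * (∑ i, α i))) * (‖b w‖) ^ n) :=
            mul_le_mul_of_nonneg_left (ih α w) (norm_nonneg _)
        _ = SS A C n α * h ^ (∑ i, α i) * jbr w ^ (-(ρ * (∑ i, α i))) *
              (‖b w‖) ^ (n + 1) := by
            rw [pow_succ']
            ring
    -- bound the β ≠ 0 terms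
    have hterm : ∀ β ∈ (bigbox α).erase 0,
        (cf α β : ℝ) * (‖multiDeriv β b w‖ *
            ‖multiDeriv (α - β) g w‖)
        ≤ C * ((cf α β : ℝ) * A (∑ i, β i) * SS A C n (α - β)) * h ^ (∑ i, α i) *
            jbr w ^ (-(ρ * (∑ i, α i))) * (‖b w‖) ^ (n + 1) := by
      intro β hβ
      obtain ⟨hβ0, hβb⟩ := Finset.mem_erase.mp hβ
      have hle := mem_bigbox.mp hβb
      have hpq := sum_add_sum_sub (α := α) (β := β) hle
      have hest1 := hest β w
      have hih1 := ih (α - β) w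
      have hnn1 : (0:ℝ) ≤ C * h ^ (∑ i, β i) * A (∑ i, β i) * ‖b w‖ *
          jbr w ^ (-(ρ * (∑ i, β i))) := by
        have := (hApos (∑ i, β i)).le
        have := (jbr_pos w).le
        positivity
      have hmm : ‖multiDeriv β b w‖ * ‖multiDeriv (α - β) g w‖
          ≤ (C * h ^ (∑ i, β i) * A (∑ i, β i) * ‖b w‖ *
              jbr w ^ (-(ρ * (∑ i, β i)))) *
            (SS A C n (α - β) * h ^ (∑ i, (α - β) i) *
              jbr w ^ (-(ρ * (∑ i, (α - β) i))) * (‖b w‖) ^ n) :=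
        mul_le_mul hest1 hih1 (norm_nonneg _) hnn1
      have hpow : h ^ (∑ i, β i) * h ^ (∑ i, (α - β) i) = h ^ (∑ i, α i) := by
        rw [← pow_add, hpq]
      have hrpow : jbr w ^ (-(ρ * (∑ i, β i))) * jbr w ^ (-(ρ * (∑ i, (α - β) i)))
          = jbr w ^ (-(ρ * (∑ i, α i))) := by
        rw [← Real.rpow_add (jbr_pos w)]
        congr 1
        rw [← hpq]
        push_cast
        ring
      calc (cf α β : ℝ) * (‖multiDeriv β b w‖ *
              ‖multiDeriv (α - β) g w‖)
          ≤ (cf α β : ℝ) * ((C * h ^ (∑ i, β i) * A (∑ i, β i) * ‖b w‖ *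
              jbr w ^ (-(ρ * (∑ i, β i)))) *
            (SS A C n (α - β) * h ^ (∑ i, (α - β) i) *
              jbr w ^ (-(ρ * (∑ i, (α - β) i))) * (‖b w‖) ^ n)) :=
            mul_le_mul_of_nonneg_left hmm (Nat.cast_nonneg _)
        _ = C * ((cf α β : ℝ) * A (∑ i, β i) * SS A C n (α - β)) *
              (h ^ (∑ i, β i) * h ^ (∑ i, (α - β) i)) *
              (jbr w ^ (-(ρ * (∑ i, β i))) * jbr w ^ (-(ρ * (∑ i, (α - β) i)))) *
              (‖b w‖ * (‖b w‖) ^ n) := by ring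
        _ = C * ((cf α β : ℝ) * A (∑ i, β i) * SS A C n (α - β)) * h ^ (∑ i, α i) *
              jbr w ^ (-(ρ * (∑ i, α i))) * (‖b w‖) ^ (n + 1) := by
            rw [hpow, hrpow, ← pow_succ']
    calc (cf α (0:Fin M → ℕ) : ℝ) * (‖multiDeriv 0 b w‖ *
            ‖multiDeriv (α - 0) g w‖)
          + ∑ β ∈ (bigbox α).erase 0, (cf α β : ℝ) * (‖multiDeriv β b w‖ *
              ‖multiDeriv (α - β) g w‖)
        ≤ SS A C n α * h ^ (∑ i, α i) * jbr w ^ (-(ρ * (∑ i, α i))) *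
              (‖b w‖) ^ (n + 1)
          + ∑ β ∈ (bigbox α).erase 0,
              C * ((cf α β : ℝ) * A (∑ i, β i) * SS A C n (α - β)) * h ^ (∑ i, α i) *
                jbr w ^ (-(ρ * (∑ i, α i))) * (‖b w‖) ^ (n + 1) :=
          add_le_add hzero (Finset.sum_le_sum hterm)
      _ = (SS A C n α + C * ∑ β ∈ (bigbox α).erase 0,
              (cf α β : ℝ) * A (∑ i, β i) * SS A C n (α - β)) *
            h ^ (∑ i, α i) * jbr w ^ (-(ρ * (∑ i, α i))) * (‖b w‖) ^ (n + 1) := by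
          rw [add_mul, add_mul, add_mul]
          congr 1
          rw [Finset.mul_sum, Finset.sum_mul, Finset.sum_mul, Finset.sum_mul]
          try exact Finset.sum_congr rfl fun β _ => by ring
      _ = SS A C (n + 1) α * h ^ (∑ i, α i) * jbr w ^ (-(ρ * (∑ i, α i))) *
            (‖b w‖) ^ (n + 1) := by
          rw [← SS_succ]

end Main
section Final

variable {M : ℕ}

lemma SS_le (A : ℕ → ℝ) (hApos : ∀ p, 0 < A p) (hA0 : A 0 = 1)
    (hM4 : ∀ p : ℕ, 1 ≤ p → (A p / (Nat.factorial p)) ^ 2 ≤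
        (A (p - 1) / (Nat.factorial (p - 1))) * (A (p + 1) / (Nat.factorial (p + 1))))
    {C : ℝ} (hC : 1 ≤ C) (n : ℕ) (α : Fin M → ℕ) :
    SS A C n α ≤ 2 ^ n * A (∑ i, α i) * (C * 2 ^ (M + 2)) ^ (∑ i, α i) := by
  have hC0 : (0:ℝ) ≤ C := le_trans zero_le_one hC
  set m := ∑ i, α i with hm
  set B : ℝ := 2 ^ n * C ^ m * (A m * 2 ^ m * ((2:ℝ) ^ M) ^ m) with hB
  have hBnn : (0:ℝ) ≤ B := by
    have := (hApos m).le
    positivity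
  have hterm : ∀ k ∈ Finset.range (n + 1),
      (n.choose k : ℝ) * C ^ k * TT A k α ≤ if k ≤ m then B else 0 := by
    intro k hk
    by_cases hkm : k ≤ m
    · rw [if_pos hkm]
      have h1 : (n.choose k : ℝ) ≤ 2 ^ n := by
        have h1n : n.choose k ≤ 2 ^ n := by
          rw [← Nat.sum_range_choose n]
          exact Finset.single_le_sum (f := fun j => n.choose j) (fun j _ => Nat.zero_le _) hk
        exact_mod_cast h1n
      have h2 : C ^ k ≤ C ^ m := pow_le_pow_right₀ hC hkm
      have h2M : (1:ℝ) ≤ 2 ^ M := by exact_mod_cast Nat.one_le_two_pow (n := M)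
      have h3 : TT A k α ≤ A m * 2 ^ m * ((2:ℝ) ^ M) ^ m := by
        refine le_trans (TT_le A hApos hA0 hM4 k α) ?_
        refine mul_le_mul_of_nonneg_left (pow_le_pow_right₀ h2M hkm) ?_
        have := (hApos m).le
        positivity
      rw [hB]
      have hTnn := TT_nonneg A hApos k α
      have hCk : (0:ℝ) ≤ C ^ k := by positivity
      calc (n.choose k : ℝ) * C ^ k * TT A k α
          ≤ 2 ^ n * C ^ k * TT A k α := by
            apply mul_le_mul_of_nonneg_right (mul_le_mul_of_nonneg_right h1 hCk) hTnn
        _ ≤ 2 ^ n * C ^ m * TT A k α := by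
            apply mul_le_mul_of_nonneg_right (mul_le_mul_of_nonneg_left h2 (by positivity)) hTnn
        _ ≤ 2 ^ n * C ^ m * (A m * 2 ^ m * ((2:ℝ) ^ M) ^ m) := by
            apply mul_le_mul_of_nonneg_left h3 (by positivity)
    · rw [if_neg hkm]
      have hz : TT A k α = 0 := TT_eq_zero A k α (by omega)
      rw [hz, mul_zero]
  calc SS A C n α ≤ ∑ k ∈ Finset.range (n + 1), (if k ≤ m then B else 0) :=
        Finset.sum_le_sum hterm
    _ = ∑ k ∈ (Finset.range (n + 1)).filter (fun k => k ≤ m), B :=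
        (Finset.sum_filter _ _).symm
    _ = ((Finset.range (n + 1)).filter (fun k => k ≤ m)).card * B := by
        rw [Finset.sum_const, nsmul_eq_mul]
    _ ≤ (m + 1 : ℝ) * B := by
        apply mul_le_mul_of_nonneg_right _ hBnn
        have hsub : (Finset.range (n + 1)).filter (fun k => k ≤ m) ⊆ Finset.range (m + 1) := by
          intro k hk
          simp only [Finset.mem_filter, Finset.mem_range] at hk ⊢
          omega
        have := Finset.card_le_card hsub
        rw [Finset.card_range] at this
        exact_mod_cast this
    _ ≤ (2:ℝ) ^ m * B := by
        apply mul_le_mul_of_nonneg_right _ hBnn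
        have hnat : m + 1 ≤ 2 ^ m := Nat.lt_two_pow_self
        calc (m + 1 : ℝ) = ((m + 1 : ℕ) : ℝ) := by push_cast; ring
          _ ≤ ((2 ^ m : ℕ) : ℝ) := by exact_mod_cast hnat
          _ = (2:ℝ) ^ m := by push_cast; ring
    _ = 2 ^ n * A m * (C * 2 ^ (M + 2)) ^ m := by
        rw [hB]
        have h4 : ((2:ℝ) ^ (M + 2)) ^ m = ((2:ℝ) ^ M) ^ m * (2 ^ m * 2 ^ m) := by
          rw [pow_add, mul_pow]
          congr 1
          rw [show ((2:ℝ) ^ 2) = 2 * 2 by norm_num, mul_pow]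
        rw [mul_pow, h4]
        ring

end Final
/-- If a smooth nowhere-vanishing `b` on `ℝ^{2d}` satisfies
`|D^α b(w)| ≤ C h^{|α|} A_{|α|} |b(w)| ⟨w⟩^{-ρ|α|}` for a sequence `A_p` with
`A_0 = A_1 = 1`, `A_p` log-convex, `A_p/p!` log-convex (M.4) and `∑ A_{p-1}/A_p < ∞`
(M.3)', then there exist `h₁, C₁ > 0` such that for all `n` and `α`,
`|D^α (b(w)^n)| ≤ C₁ 2^n h₁^{|α|} A_{|α|} ⟨w⟩^{-ρ|α|} |b(w)|^n`. -/
theorem stmt13 (d : ℕ) (b : EuclideanSpace ℝ (Fin (2 * d)) → ℂ)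
    (hb : ContDiff ℝ (⊤ : ℕ∞) b) (hbne : ∀ w, b w ≠ 0)
    (ρ : ℝ) (hρ0 : 0 < ρ) (hρ1 : ρ ≤ 1) (h C : ℝ) (hh : 0 < h) (hC : 1 ≤ C)
    (A : ℕ → ℝ) (hApos : ∀ p, 0 < A p) (hA0 : A 0 = 1) (hA1 : A 1 = 1)
    (hlc : ∀ p : ℕ, 1 ≤ p → (A p) ^ 2 ≤ A (p - 1) * A (p + 1))
    (hM4 : ∀ p : ℕ, 1 ≤ p →
      (A p / (Nat.factorial p)) ^ 2 ≤
        (A (p - 1) / (Nat.factorial (p - 1))) * (A (p + 1) / (Nat.factorial (p + 1))))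
    (hM3' : Summable (fun p : ℕ => A p / A (p + 1)))
    (hest : ∀ (α : Fin (2 * d) → ℕ) (w : EuclideanSpace ℝ (Fin (2 * d))),
      ‖multiDeriv α b w‖ ≤
        C * h ^ (∑ i, α i) * A (∑ i, α i) * ‖b w‖ *
          jbr w ^ (-(ρ * (∑ i, α i)))) :
    ∃ h₁ C₁ : ℝ, 0 < h₁ ∧ 0 < C₁ ∧
      ∀ (n : ℕ) (α : Fin (2 * d) → ℕ) (w : EuclideanSpace ℝ (Fin (2 * d))),
        ‖multiDeriv α (fun w' => (b w') ^ n) w‖ ≤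
          C₁ * 2 ^ n * h₁ ^ (∑ i, α i) * A (∑ i, α i) *
            jbr w ^ (-(ρ * (∑ i, α i))) * (‖b w‖) ^ n := by
  have hb' : ContDiff ℝ ∞ b := hb.of_le (by simp)
  have hC0 : (0:ℝ) < C := lt_of_lt_of_le one_pos hC
  refine ⟨C * h * 2 ^ (2 * d + 2), 1, by positivity, one_pos, ?_⟩
  intro n α w
  have hmain := main_est b hb' ρ h C hh hC A hApos hest n α w
  have hSS := SS_le A hApos hA0 hM4 hC n α
  have hhm : (0:ℝ) ≤ h ^ (∑ i, α i) := by positivity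
  have hj : (0:ℝ) ≤ jbr w ^ (-(ρ * (∑ i, α i))) := (Real.rpow_pos_of_pos (jbr_pos w) _).le
  have hbn : (0:ℝ) ≤ (‖b w‖) ^ n := by positivity
  calc ‖multiDeriv α (fun w' => (b w') ^ n) w‖
      ≤ SS A C n α * h ^ (∑ i, α i) * jbr w ^ (-(ρ * (∑ i, α i))) *
          (‖b w‖) ^ n := hmain
    _ ≤ (2 ^ n * A (∑ i, α i) * (C * 2 ^ (2 * d + 2)) ^ (∑ i, α i)) * h ^ (∑ i, α i) *
          jbr w ^ (-(ρ * (∑ i, α i))) * (‖b w‖) ^ n :=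
        mul_le_mul_of_nonneg_right (mul_le_mul_of_nonneg_right
          (mul_le_mul_of_nonneg_right hSS hhm) hj) hbn
    _ = 1 * 2 ^ n * (C * h * 2 ^ (2 * d + 2)) ^ (∑ i, α i) * A (∑ i, α i) *
          jbr w ^ (-(ρ * (∑ i, α i))) * (‖b w‖) ^ n := by
        rw [mul_pow, mul_pow]
        ring
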